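/- Let W and W̃ be real C×D matrices, b ∈ ℝ^C, and h ∈ ℝ^D with Euclidean norm ‖h‖₂ ≤ R. Define p = σ(W·h + b) and p̃ = σ(W̃·h + b), where σ is the softmax function. Then for every class index c ∈ {1,…,C}, |p̃_c − p_c| ≤ (1/2)·R·‖W − W̃‖₂, where ‖·‖₂ on matrices denotes the spectral norm. -/

import Mathlib

/-!
Along the segment `t ↦ u + t • d` the derivative of `σ_c` is
`σ_c (d_c - ∑ ℓ, σ_ℓ d_ℓ) = σ_c ∑_{ℓ ≠ c} σ_ℓ (d_c - d_ℓ)`. If every `|d_ℓ| ≤ M` this is at most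
`2 M σ_c (1 - σ_c) ≤ M / 2`, so by the mean value theorem `σ_c` moves by at most `M / 2`.
For `d = (W̃ - W) h` every coordinate is bounded by `‖(W - W̃) h‖ ≤ ‖W - W̃‖₂ R`.
-/

/-- The softmax function on `ℝ^C`: `σ_i(u) = exp(u_i) / ∑_ℓ exp(u_ℓ)`. -/
noncomputable def softmax {C : ℕ} (u : Fin C → ℝ) : Fin C → ℝ :=
  fun i => Real.exp (u i) / ∑ ℓ, Real.exp (u ℓ)

/-- The spectral norm of a real `C × D` matrix: the operator norm of the induced
linear map from `ℝ^D` with the Euclidean norm to `ℝ^C` with the Euclidean norm. -/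
noncomputable def matSpectralNorm {C D : ℕ} (A : Matrix (Fin C) (Fin D) ℝ) : ℝ :=
  ‖LinearMap.toContinuousLinearMap (Matrix.toEuclideanLin A)‖

open Finset Matrix

theorem abs_mul_sub_sum_mul_le {ι : Type*} [Fintype ι] [DecidableEq ι] {p d : ι → ℝ} {M : ℝ}
    (hp : ∀ i, 0 ≤ p i) (hp_sum : ∑ i, p i = 1) (hd : ∀ i, |d i| ≤ M) (c : ι) :
    |p c * (d c - ∑ i, p i * d i)| ≤ M / 2 := by
  have hM : 0 ≤ M := (abs_nonneg _).trans (hd c)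
  have hsplit : d c - ∑ i, p i * d i = ∑ i ∈ univ.erase c, p i * (d c - d i) := by
    rw [sum_erase _ (by simp)]
    simp only [mul_sub, sum_sub_distrib, ← sum_mul, hp_sum, one_mul]
  have hdev : |d c - ∑ i, p i * d i| ≤ 2 * M * (1 - p c) :=
    calc |d c - ∑ i, p i * d i| ≤ ∑ i ∈ univ.erase c, p i * (2 * M) := by
          rw [hsplit]
          refine (abs_sum_le_sum_abs _ _).trans (sum_le_sum fun i _ => ?_)
          rw [abs_mul, abs_of_nonneg (hp i)]
          have := abs_sub (d c) (d i)
          gcongr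
          · exact hp i
          · linarith [hd c, hd i]
      _ = 2 * M * (1 - p c) := by
          rw [← sum_mul, sum_erase_eq_sub (mem_univ c), hp_sum, mul_comm]
  calc |p c * (d c - ∑ i, p i * d i)| ≤ p c * (2 * M * (1 - p c)) := by
        rw [abs_mul, abs_of_nonneg (hp c)]
        exact mul_le_mul_of_nonneg_left hdev (hp c)
    _ ≤ M / 2 := by nlinarith [mul_nonneg hM (sq_nonneg (2 * p c - 1))]

section Softmax

variable {C : ℕ}

theorem softmax_pos [NeZero C] (u : Fin C → ℝ) (i : Fin C) : 0 < softmax u i :=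
  div_pos (Real.exp_pos _) (sum_pos (fun _ _ => Real.exp_pos _) univ_nonempty)

theorem sum_softmax [NeZero C] (u : Fin C → ℝ) : ∑ i, softmax u i = 1 := by
  simp only [softmax, ← sum_div]
  exact div_self (sum_pos (fun _ _ => Real.exp_pos _) univ_nonempty).ne'

theorem hasDerivAt_softmax_add_smul [NeZero C] (u d : Fin C → ℝ) (c : Fin C) (t : ℝ) :
    HasDerivAt (fun s : ℝ => softmax (u + s • d) c)
      (softmax (u + t • d) c * (d c - ∑ i, softmax (u + t • d) i * d i)) t := by
  have hexp : ∀ i, HasDerivAt (fun s => Real.exp (u i + s * d i))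
      (Real.exp (u i + t * d i) * d i) t := fun i =>
    ((hasDerivAt_mul_const (d i)).const_add (u i)).exp
  have hsum_pos : 0 < ∑ i, Real.exp (u i + t * d i) :=
    sum_pos (fun _ _ => Real.exp_pos _) univ_nonempty
  refine ((hexp c).div (HasDerivAt.fun_sum fun i _ => hexp i) hsum_pos.ne').congr_deriv ?_
  simp only [softmax, Pi.add_apply, Pi.smul_apply, smul_eq_mul, div_mul_eq_mul_div, ← sum_div]
  field_simp

theorem abs_softmax_add_sub_le (u d : Fin C → ℝ) (c : Fin C) {M : ℝ} (hd : ∀ i, |d i| ≤ M) :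
    |softmax (u + d) c - softmax u c| ≤ M / 2 := by
  have : NeZero C := NeZero.of_pos c.pos
  have hderiv_le : ∀ t : ℝ, ‖softmax (u + t • d) c * (d c - ∑ i, softmax (u + t • d) i * d i)‖
      ≤ M / 2 := fun t =>
    abs_mul_sub_sum_mul_le (fun i => (softmax_pos _ i).le) (sum_softmax _) hd c
  simpa using norm_image_sub_le_of_norm_deriv_le_segment_01'
    (fun t _ => (hasDerivAt_softmax_add_smul u d c t).hasDerivWithinAt) (fun t _ => hderiv_le t)

end Softmax

theorem abs_mulVec_apply_le_matSpectralNorm_mul_norm {C D : ℕ} (A : Matrix (Fin C) (Fin D) ℝ)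
    (x : EuclideanSpace ℝ (Fin D)) (i : Fin C) :
    |(A *ᵥ WithLp.equiv 2 (Fin D → ℝ) x) i| ≤ matSpectralNorm A * ‖x‖ :=
  (PiLp.norm_apply_le (Matrix.toEuclideanLin A x) i).trans
    ((LinearMap.toContinuousLinearMap (Matrix.toEuclideanLin A)).le_opNorm x)

theorem softmax_perturbation_coord_general {C D : ℕ}
    (W Wt : Matrix (Fin C) (Fin D) ℝ) (b : Fin C → ℝ) (R : ℝ)
    (h : EuclideanSpace ℝ (Fin D)) (hh : ‖h‖ ≤ R) (c : Fin C) :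
    |softmax (Wt.mulVec (WithLp.equiv 2 (Fin D → ℝ) h) + b) c -
        softmax (W.mulVec (WithLp.equiv 2 (Fin D → ℝ) h) + b) c| ≤
      (1 / 2) * R * matSpectralNorm (W - Wt) := by
  set x := WithLp.equiv 2 (Fin D → ℝ) h
  have hd : ∀ i, |(Wt *ᵥ x - W *ᵥ x) i| ≤ matSpectralNorm (W - Wt) * R := fun i => by
    have hi := abs_mulVec_apply_le_matSpectralNorm_mul_norm (W - Wt) h i
    rw [sub_mulVec, Pi.sub_apply, abs_sub_comm] at hi
    exact hi.trans (mul_le_mul_of_nonneg_left hh (norm_nonneg _))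
  have hσ := abs_softmax_add_sub_le (W *ᵥ x + b) (Wt *ᵥ x - W *ᵥ x) c hd
  rw [show W *ᵥ x + b + (Wt *ᵥ x - W *ᵥ x) = Wt *ᵥ x + b by abel] at hσ
  linarith

/-- For every class index `c`, the perturbation of the predicted probability satisfies
`|p̃_c - p_c| ≤ (1/2)·R·‖W - W̃‖₂`, where `p = σ(W·h + b)` and `p̃ = σ(W̃·h + b)`. -/
theorem softmax_perturbation_coord {C D : ℕ} (hC : 0 < C) (hD : 0 < D)
    (W Wt : Matrix (Fin C) (Fin D) ℝ) (b : Fin C → ℝ) (R : ℝ)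
    (h : EuclideanSpace ℝ (Fin D)) (hh : ‖h‖ ≤ R) (c : Fin C) :
    |softmax (Wt.mulVec (WithLp.equiv 2 (Fin D → ℝ) h) + b) c -
        softmax (W.mulVec (WithLp.equiv 2 (Fin D → ℝ) h) + b) c| ≤
      (1 / 2) * R * matSpectralNorm (W - Wt) :=
  softmax_perturbation_coord_general W Wt b R h hh c
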